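/- arXiv:2402.10112 — 2 statements merged into one kernel-verified Lean document; each statement's English description precedes it below -/
import Mathlib

section
/- Let G be a group acting non-singularly on a measure space (X, 𝓕, μ), let K ⊆ G be finite, symmetric, and contain the identity, and let 𝒯 be a finite family of finite subsets of G. Suppose for each T ∈ 𝒯 a measurable T-set W_T is given such that μ(T₁W_{T₁} ∩ T₂W_{T₂}) = 0 for distinct T₁, T₂ ∈ 𝒯. Then for every T ∈ 𝒯, every g ∈ ∂_K T \ T, every S ∈ 𝒯, and every s ∈ int_K S = S \ ∂_K S, one has μ(gW_T ∩ sW_S) = 0; in other words, gW_T is contained, up to a null set, in the complement of ⋃_{S∈𝒯}(int_K S)W_S. -/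
/-!
Pick `k ∈ K` with `k g ∈ T`. Since `1 ∈ K` and `s` lies in the `K`-interior of `S`, also
`k s ∈ S`. Thus `(k g) W_T` and `(k s) W_S` are two distinct levels of the towers, hence almost
disjoint (inside one tower because `W_T` is a `T`-set, across towers by hypothesis), and
translating back by `k⁻¹` preserves null sets.
-/

open MeasureTheory
open scoped Pointwise ENNReal

/-- The *`K`-boundary* of `H`: the set of `g ∈ G` such that `Kg` meets both `H` and its
complement. -/
def kBoundary {G : Type*} [Group G] (K H : Set G) : Set G :=
  {g : G | (∃ k ∈ K, k * g ∈ H) ∧ ∃ k ∈ K, k * g ∉ H}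

/-- A measurable action is *non-singular* if each group element acts measurably and
preserves nullity of measurable sets. -/
def NonSingularAction (G : Type*) {X : Type*} [Group G] [MulAction G X] [MeasurableSpace X]
    (μ : Measure X) : Prop :=
  (∀ g : G, Measurable fun x : X => g • x) ∧
  ∀ (g : G) (A : Set X), MeasurableSet A → (μ A = 0 ↔ μ (g⁻¹ • A) = 0)

/-- A set `W` is an *`H`-set* if its images under distinct elements of `H` are almost
disjoint. -/
def IsHSet {G X : Type*} [Group G] [MulAction G X] [MeasurableSpace X]
    (μ : Measure X) (H : Set G) (W : Set X) : Prop :=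
  ∀ h ∈ H, ∀ h' ∈ H, h ≠ h' → μ ((h • W) ∩ (h' • W)) = 0

theorem mul_mem_of_mem_of_notMem_kBoundary {G : Type*} [Group G] {K H : Set G} {s k : G}
    (hKone : (1 : G) ∈ K) (hs : s ∈ H) (hsb : s ∉ kBoundary K H) (hk : k ∈ K) :
    k * s ∈ H := by
  by_contra hks
  exact hsb ⟨⟨1, hKone, by rwa [one_mul]⟩, k, hk, hks⟩

namespace NonSingularAction

variable {G X : Type*} [Group G] [MulAction G X] [MeasurableSpace X] {μ : Measure X}

theorem measurableSet_smul (hns : NonSingularAction G μ) (g : G) {A : Set X}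
    (hA : MeasurableSet A) : MeasurableSet (g • A) := by
  simpa only [Set.preimage_smul, inv_inv] using hns.1 g⁻¹ hA

theorem measure_smul_eq_zero_iff (hns : NonSingularAction G μ) (g : G) {A : Set X}
    (hA : MeasurableSet A) : μ (g • A) = 0 ↔ μ A = 0 := by
  simpa only [inv_inv] using (hns.2 g⁻¹ A hA).symm

end NonSingularAction

theorem measure_smul_inter_smul_eq_zero_of_towers {G X : Type*} [Group G] [MulAction G X]
    [MeasurableSpace X] {μ : Measure X} {𝒯 : Finset (Finset G)} {W : Finset G → Set X}
    (hWT : ∀ T ∈ 𝒯, IsHSet μ (T : Set G) (W T))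
    (hdisj : ∀ T₁ ∈ 𝒯, ∀ T₂ ∈ 𝒯, T₁ ≠ T₂ →
      μ ((⋃ t ∈ T₁, t • W T₁) ∩ ⋃ t ∈ T₂, t • W T₂) = 0)
    {T S : Finset G} (hT : T ∈ 𝒯) (hS : S ∈ 𝒯) {a b : G} (ha : a ∈ T) (hb : b ∈ S)
    (hne : T = S → a ≠ b) : μ ((a • W T) ∩ (b • W S)) = 0 := by
  by_cases hTS : T = S
  · subst hTS
    exact hWT T hT a ha b hb (hne rfl)
  · refine measure_mono_null (Set.inter_subset_inter ?_ ?_) (hdisj T hT S hS hTS)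
    · exact Set.subset_biUnion_of_mem (u := fun t => t • W T) ha
    · exact Set.subset_biUnion_of_mem (u := fun t => t • W S) hb

theorem boundary_image_almost_disjoint_interior_general {G X : Type*} [Group G] [MulAction G X]
    [MeasurableSpace X] (μ : Measure X) (hns : NonSingularAction G μ)
    (K : Finset G) (hKone : (1 : G) ∈ K)
    (𝒯 : Finset (Finset G)) (W : Finset G → Set X)
    (hWmeas : ∀ T ∈ 𝒯, MeasurableSet (W T))
    (hWT : ∀ T ∈ 𝒯, IsHSet μ (T : Set G) (W T))
    (hdisj : ∀ T₁ ∈ 𝒯, ∀ T₂ ∈ 𝒯, T₁ ≠ T₂ →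
      μ ((⋃ t ∈ T₁, t • W T₁) ∩ ⋃ t ∈ T₂, t • W T₂) = 0) :
    ∀ T ∈ 𝒯, ∀ g ∈ kBoundary (K : Set G) (T : Set G) \ (T : Set G),
      ∀ S ∈ 𝒯, ∀ s ∈ (S : Set G) \ kBoundary (K : Set G) (S : Set G),
        μ ((g • W T) ∩ (s • W S)) = 0 := by
  rintro T hT g ⟨⟨⟨k, hk, hkg⟩, -⟩, hgT⟩ S hS s ⟨hsS, hsb⟩
  have hks : k * s ∈ (S : Set G) :=
    mul_mem_of_mem_of_notMem_kBoundary (by exact_mod_cast hKone) hsS hsb hk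
  have hne : T = S → k * g ≠ k * s := by
    rintro rfl hgs
    exact hgT (mul_left_cancel hgs ▸ hsS)
  have hmeas : MeasurableSet ((g • W T) ∩ (s • W S)) :=
    (hns.measurableSet_smul g (hWmeas T hT)).inter (hns.measurableSet_smul s (hWmeas S hS))
  rw [← hns.measure_smul_eq_zero_iff k hmeas, Set.smul_set_inter, smul_smul, smul_smul]
  exact measure_smul_inter_smul_eq_zero_of_towers hWT hdisj hT hS hkg hks hne

/-- if the towers `T • W_T`, `T ∈ 𝒯`, are pairwise almost disjoint and each
`W_T` is a `T`-set, then for `g` in the outside `K`-boundary of `T`, the image `g • W_T` is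
almost disjoint from every `s • W_S` with `s` in the `K`-interior of `S`. -/
theorem boundary_image_almost_disjoint_interior {G X : Type*} [Group G] [MulAction G X]
    [MeasurableSpace X] (μ : Measure X) (hns : NonSingularAction G μ)
    (K : Finset G) (hKsymm : ∀ k ∈ K, k⁻¹ ∈ K) (hKone : (1 : G) ∈ K)
    (𝒯 : Finset (Finset G)) (W : Finset G → Set X)
    (hWmeas : ∀ T ∈ 𝒯, MeasurableSet (W T))
    (hWT : ∀ T ∈ 𝒯, IsHSet μ (T : Set G) (W T))
    (hdisj : ∀ T₁ ∈ 𝒯, ∀ T₂ ∈ 𝒯, T₁ ≠ T₂ →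
      μ ((⋃ t ∈ T₁, t • W T₁) ∩ ⋃ t ∈ T₂, t • W T₂) = 0) :
    ∀ T ∈ 𝒯, ∀ g ∈ kBoundary (K : Set G) (T : Set G) \ (T : Set G),
      ∀ S ∈ 𝒯, ∀ s ∈ (S : Set G) \ kBoundary (K : Set G) (S : Set G),
        μ ((g • W T) ∩ (s • W S)) = 0 :=
  boundary_image_almost_disjoint_interior_general μ hns K hKone 𝒯 W hWmeas hWT hdisj
end

section
/- Let G be a countable group acting non-singularly on a probability space (X, 𝓕, μ), with each fixed-point set {x ∈ X : gx = x} (g ∈ G) measurable. Suppose that for every finite K ⊆ G and every δ > 0 there exists a tiling family for G all of whose shapes are (K, δ)-invariant, and suppose that for all 0 < ε < 1, all 0 < δ < ε³/250, every finite symmetric K ⊆ G containing the identity, and every tiling family 𝒯 for G with (K, δ)-invariant shapes, there exist T-sets W_T ⊆ X (T ∈ 𝒯) satisfying: (1) μ(T₁W_{T₁} ∩ T₂W_{T₂}) = 0 for distinct T₁, T₂ ∈ 𝒯; (2) μ(⋃_{T∈𝒯} TW_T) > 1 − ε; (3) ∑_{T∈𝒯} μ((∂_K T)W_T) < ε. Then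 the action of G on X is pointwise free. -/
open MeasureTheory
open scoped Pointwise ENNReal

/-- A finite set `H ⊆ G` is *`(K, ε)`-invariant* if its `K`-boundary has fewer than `ε * |H|`
elements. -/
def KInvariant {G : Type*} [Group G] (K : Finset G) (ε : ℝ) (H : Finset G) : Prop :=
  ((kBoundary (K : Set G) (H : Set G)).ncard : ℝ) < ε * H.card

/-- A finite family `𝒯` of finite subsets of `G` is a *tiling family* if there are centre sets
`C T` (for `T ∈ 𝒯`) such that the translates `Tc`, `c ∈ C T`, `T ∈ 𝒯`, partition `G`. -/
def IsTilingFamily {G : Type*} [Group G] (𝒯 : Finset (Finset G)) (C : Finset G → Set G) :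
    Prop :=
  (∀ T ∈ 𝒯, ∀ c ∈ C T, ∀ T' ∈ 𝒯, ∀ c' ∈ C T', (T, c) ≠ (T', c') →
    Disjoint ((fun t => t * c) '' (T : Set G)) ((fun t => t * c') '' (T' : Set G))) ∧
  (⋃ T ∈ 𝒯, ⋃ c ∈ C T, (fun t => t * c) '' (T : Set G)) = Set.univ

/-- An action of `G` on a measure space is *pointwise free* if the set of points fixed by some
non-identity element has measure zero. -/
def PointwiseFree (G : Type*) {X : Type*} [Group G] [MulAction G X] [MeasurableSpace X]
    (μ : Measure X) : Prop :=
  μ {x : X | ∃ g : G, g ≠ 1 ∧ g • x = x} = 0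

/-!
Fix `g ≠ 1`, apply the decomposition to `K = {1, g, g⁻¹}` and write `A = ⋃ T, T W_T`. A fixed
point `t • w` of `g` with `w ∈ W_T`, `t ∈ T` equals `(g t) • w`; so either `g t ∈ T` and the
point lies in the null overlap `t W_T ∩ (g t) W_T`, or `t ∈ ∂_K T` and it lies in the boundary
part, of measure `< ε`. Since `Fix g` is measurable, `μ (Fix g) + μ A ≤ 1 + μ (Fix g ∩ A)`,
whence `μ (Fix g) ≤ 2ε` for every `ε`; a countable union of null sets is null.
-/

theorem MeasureTheory.measure_add_measure_le_measure_univ_add_inter {α : Type*}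
    [MeasurableSpace α] (μ : Measure α) {s : Set α} (hs : MeasurableSet s) (t : Set α) :
    μ s + μ t ≤ μ Set.univ + μ (s ∩ t) := by
  rw [← measure_union_add_inter' hs t]
  gcongr
  exact Set.subset_univ _

theorem ENNReal.eq_zero_of_forall_le_ofReal_add_ofReal {a : ℝ≥0∞}
    (h : ∀ ε : ℝ, 0 < ε → ε < 1 → a ≤ ENNReal.ofReal ε + ENNReal.ofReal ε) : a = 0 := by
  have hlim : Filter.Tendsto (fun ε : ℝ => ENNReal.ofReal ε + ENNReal.ofReal ε)
      (nhdsWithin 0 (Set.Ioi 0)) (nhds 0) :=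
    ((ENNReal.continuous_ofReal.add ENNReal.continuous_ofReal).tendsto' 0 0
      (by simp)).mono_left nhdsWithin_le_nhds
  refine nonpos_iff_eq_zero.mp (ge_of_tendsto hlim ?_)
  filter_upwards [Ioo_mem_nhdsGT zero_lt_one] with ε hε using h ε hε.1 hε.2

section Tiles

variable {G X : Type*} [Group G] [MulAction G X]

theorem mem_kBoundary_of_mul_notMem {K T : Set G} {g t : G} (h1 : (1 : G) ∈ K) (hg : g ∈ K)
    (ht : t ∈ T) (hgt : g * t ∉ T) : t ∈ kBoundary K T :=
  ⟨⟨1, h1, by rwa [one_mul]⟩, ⟨g, hg, hgt⟩⟩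

theorem IsHSet.measure_biUnion_inter_null [MeasurableSpace X] {μ : Measure X} {T : Finset G}
    {W : Set X} (hW : IsHSet μ (T : Set G) W) :
    μ (⋃ t ∈ T, ⋃ t' ∈ T, ⋃ (_ : t ≠ t'), t • W ∩ t' • W) = 0 :=
  (measure_biUnion_null_iff T.countable_toSet).2 fun t ht =>
    (measure_biUnion_null_iff T.countable_toSet).2 fun t' ht' =>
      measure_iUnion_null (hW t ht t' ht')

theorem fixedPoints_inter_tiles_subset {K : Set G} {g : G} (h1 : (1 : G) ∈ K) (hg : g ∈ K)
    (hg1 : g ≠ 1) (𝒯 : Finset (Finset G)) (W : Finset G → Set X) :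
    {x : X | g • x = x} ∩ (⋃ T ∈ 𝒯, ⋃ t ∈ T, t • W T) ⊆
      (⋃ T ∈ 𝒯, ⋃ t ∈ T, ⋃ t' ∈ T, ⋃ (_ : t ≠ t'), t • W T ∩ t' • W T) ∪
        ⋃ T ∈ 𝒯, ⋃ b ∈ kBoundary K (T : Set G), b • W T := by
  rintro _ ⟨hfix, hx⟩
  simp only [Set.mem_iUnion] at hx
  obtain ⟨T, hT, t, ht, w, hw, rfl⟩ := hx
  have hgtw : (g * t) • w = t • w := by rw [mul_smul]; exact hfix
  by_cases hgt : g * t ∈ T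
  · have hne : t ≠ g * t := fun h => hg1 (by simpa using h.symm)
    left
    simp only [Set.mem_iUnion]
    exact ⟨T, hT, t, ht, g * t, hgt, hne, ⟨w, hw, rfl⟩, ⟨w, hw, hgtw⟩⟩
  · right
    simp only [Set.mem_iUnion]
    exact ⟨T, hT, t, mem_kBoundary_of_mul_notMem h1 hg ht hgt, w, hw, rfl⟩

theorem measure_fixedPoints_le_of_tiles [MeasurableSpace X] {μ : Measure X} [IsProbabilityMeasure μ] {K : Set G} {g : G}
    (h1 : (1 : G) ∈ K) (hg : g ∈ K) (hg1 : g ≠ 1) (hfix : MeasurableSet {x : X | g • x = x})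
    {𝒯 : Finset (Finset G)} {W : Finset G → Set X} (hW : ∀ T ∈ 𝒯, IsHSet μ (T : Set G) (W T))
    {ε : ℝ} (hcover : ENNReal.ofReal (1 - ε) < μ (⋃ T ∈ 𝒯, ⋃ t ∈ T, t • W T))
    (hbdry : ∑ T ∈ 𝒯, μ (⋃ b ∈ kBoundary K (T : Set G), b • W T) < ENNReal.ofReal ε) :
    μ {x : X | g • x = x} ≤ ENNReal.ofReal ε + ENNReal.ofReal ε := by
  have hoverlap : μ (⋃ T ∈ 𝒯, ⋃ t ∈ T, ⋃ t' ∈ T, ⋃ (_ : t ≠ t'), t • W T ∩ t' • W T) = 0 :=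
    (measure_biUnion_null_iff 𝒯.countable_toSet).2 fun T hT =>
      (hW T hT).measure_biUnion_inter_null
  have hfixed_tiles : μ ({x : X | g • x = x} ∩ ⋃ T ∈ 𝒯, ⋃ t ∈ T, t • W T) ≤ ENNReal.ofReal ε :=
    calc _ ≤ _ := measure_mono (fixedPoints_inter_tiles_subset h1 hg hg1 𝒯 W)
      _ ≤ _ + _ := measure_union_le _ _
      _ ≤ 0 + ∑ T ∈ 𝒯, μ (⋃ b ∈ kBoundary K (T : Set G), b • W T) := by
          rw [hoverlap]; gcongr; exact measure_biUnion_finset_le _ _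
      _ ≤ ENNReal.ofReal ε := by rw [zero_add]; exact hbdry.le
  have hone : (1 : ℝ≥0∞) ≤ ENNReal.ofReal ε + ENNReal.ofReal (1 - ε) := by
    simpa using ENNReal.ofReal_add_le (p := ε) (q := 1 - ε)
  refine (ENNReal.add_le_add_iff_right (ENNReal.ofReal_ne_top (r := 1 - ε))).1 ?_
  calc μ {x : X | g • x = x} + ENNReal.ofReal (1 - ε)
      ≤ μ {x : X | g • x = x} + μ (⋃ T ∈ 𝒯, ⋃ t ∈ T, t • W T) := by gcongr
    _ ≤ μ Set.univ + μ ({x : X | g • x = x} ∩ ⋃ T ∈ 𝒯, ⋃ t ∈ T, t • W T) :=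
        measure_add_measure_le_measure_univ_add_inter μ hfix _
    _ ≤ ENNReal.ofReal ε + ENNReal.ofReal (1 - ε) + ENNReal.ofReal ε := by
        rw [measure_univ]; gcongr
    _ = ENNReal.ofReal ε + ENNReal.ofReal ε + ENNReal.ofReal (1 - ε) := by ring

end Tiles

theorem pointwiseFree_of_decomposition_general {G X : Type*} [Group G] [Countable G] [MulAction G X]
    [MeasurableSpace X] (μ : Measure X) [IsProbabilityMeasure μ]
    (hfix : ∀ g : G, MeasurableSet {x : X | g • x = x})
    (htile : ∀ K : Finset G, ∀ δ : ℝ, 0 < δ →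
      ∃ (𝒯 : Finset (Finset G)) (C : Finset G → Set G),
        IsTilingFamily 𝒯 C ∧ ∀ T ∈ 𝒯, KInvariant K δ T)
    (hdec : ∀ ε δ : ℝ, 0 < ε → ε < 1 → 0 < δ → δ < ε ^ 3 / 250 →
      ∀ K : Finset G, (∀ k ∈ K, k⁻¹ ∈ K) → (1 : G) ∈ K →
      ∀ (𝒯 : Finset (Finset G)) (C : Finset G → Set G), IsTilingFamily 𝒯 C →
      (∀ T ∈ 𝒯, KInvariant K δ T) →
      ∃ W : Finset G → Set X,
        (∀ T ∈ 𝒯, MeasurableSet (W T) ∧ IsHSet μ (T : Set G) (W T)) ∧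
        (∀ T₁ ∈ 𝒯, ∀ T₂ ∈ 𝒯, T₁ ≠ T₂ →
          μ ((⋃ t ∈ T₁, t • W T₁) ∩ ⋃ t ∈ T₂, t • W T₂) = 0) ∧
        ENNReal.ofReal (1 - ε) < μ (⋃ T ∈ 𝒯, ⋃ t ∈ T, t • W T) ∧
        ∑ T ∈ 𝒯, μ (⋃ g ∈ kBoundary (K : Set G) (T : Set G), g • W T) < ENNReal.ofReal ε) :
    PointwiseFree G μ := by
  classical
  have hfree : ∀ g : G, g ≠ 1 → μ {x : X | g • x = x} = 0 := fun g hg1 =>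
    ENNReal.eq_zero_of_forall_le_ofReal_add_ofReal fun ε hε hε1 => by
      let K : Finset G := {1, g, g⁻¹}
      have hK : ∀ k ∈ K, k⁻¹ ∈ K := by
        simp only [K, Finset.mem_insert, Finset.mem_singleton]
        rintro k (rfl | rfl | rfl) <;> simp
      have hδ : ε ^ 3 / 500 < ε ^ 3 / 250 := by linarith [pow_pos hε 3]
      obtain ⟨𝒯, C, h𝒯, hinv⟩ := htile K (ε ^ 3 / 500) (by positivity)
      obtain ⟨W, hW, -, hcover, hbdry⟩ :=
        hdec ε _ hε hε1 (by positivity) hδ K hK (by simp [K]) 𝒯 C h𝒯 hinv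
      exact measure_fixedPoints_le_of_tiles (K := (K : Set G)) (by simp [K]) (by simp [K]) hg1
        (hfix g) (fun T hT => (hW T hT).2) hcover hbdry
  have hunion : {x : X | ∃ g : G, g ≠ 1 ∧ g • x = x} = ⋃ (g : G) (_ : g ≠ 1), {x | g • x = x} := by
    ext x; simp
  rw [PointwiseFree, hunion]
  exact measure_iUnion_null fun g => measure_iUnion_null (hfree g)

/-- a non-singular action of a countable group admitting arbitrarily
invariant tiling families, and satisfying the decomposition property of the Ornstein–Weiss
theorem for all data, is pointwise free. -/
theorem pointwiseFree_of_decomposition {G X : Type*} [Group G] [Countable G] [MulAction G X]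
    [MeasurableSpace X] (μ : Measure X) [IsProbabilityMeasure μ]
    (hns : NonSingularAction G μ)
    (hfix : ∀ g : G, MeasurableSet {x : X | g • x = x})
    (htile : ∀ K : Finset G, ∀ δ : ℝ, 0 < δ →
      ∃ (𝒯 : Finset (Finset G)) (C : Finset G → Set G),
        IsTilingFamily 𝒯 C ∧ ∀ T ∈ 𝒯, KInvariant K δ T)
    (hdec : ∀ ε δ : ℝ, 0 < ε → ε < 1 → 0 < δ → δ < ε ^ 3 / 250 →
      ∀ K : Finset G, (∀ k ∈ K, k⁻¹ ∈ K) → (1 : G) ∈ K →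
      ∀ (𝒯 : Finset (Finset G)) (C : Finset G → Set G), IsTilingFamily 𝒯 C →
      (∀ T ∈ 𝒯, KInvariant K δ T) →
      ∃ W : Finset G → Set X,
        (∀ T ∈ 𝒯, MeasurableSet (W T) ∧ IsHSet μ (T : Set G) (W T)) ∧
        (∀ T₁ ∈ 𝒯, ∀ T₂ ∈ 𝒯, T₁ ≠ T₂ →
          μ ((⋃ t ∈ T₁, t • W T₁) ∩ ⋃ t ∈ T₂, t • W T₂) = 0) ∧
        ENNReal.ofReal (1 - ε) < μ (⋃ T ∈ 𝒯, ⋃ t ∈ T, t • W T) ∧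
        ∑ T ∈ 𝒯, μ (⋃ g ∈ kBoundary (K : Set G) (T : Set G), g • W T) < ENNReal.ofReal ε) :
    PointwiseFree G μ :=
  pointwiseFree_of_decomposition_general μ hfix htile hdec
end
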